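/- Fix k > 0. The function α_*(ξ) = −√(i(ξ−k))·√(−i(ξ+k)) satisfies: (i) α_* is complex-analytic on ℂ∖({−k+is : s ≤ 0} ∪ {k+is : s ≥ 0}); (ii) for real ξ with |ξ| < k, α_*(ξ) = i√(k²−ξ²); (iii) for real ξ with |ξ| > k, α_*(ξ) = −√(ξ²−k²); (iv) for every ξ ∈ ℂ with Re ξ · Im ξ ≤ 0 (i.e., ξ in the union of the closed second and fourth quadrants), Re α_*(ξ) ≤ 0 and Im α_*(ξ) ≥ 0. -/

import Mathlib

open MeasureTheory Set

noncomputable section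

/-- The branch cuts `B = {-k+is : s ≤ 0} ∪ {k+is : s ≥ 0}` of `α_*`. -/
def branchCuts (k : ℝ) : Set ℂ :=
  {z | z.re = -k ∧ z.im ≤ 0} ∪ {z | z.re = k ∧ 0 ≤ z.im}

/-- The function `α_*(ξ) = -√(i(ξ-k))·√(-i(ξ+k))`, with principal square roots. -/
noncomputable def alphaStar (k : ℝ) (ξ : ℂ) : ℂ :=
  -((Complex.I * (ξ - k)) ^ (1/2 : ℂ) * ((-Complex.I) * (ξ + k)) ^ (1/2 : ℂ))

/-! Write `u = √(i(ξ-k))` and `v = √(-i(ξ+k))`, so that `α_* = -uv` with `Re u, Re v ≥ 0`,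
`u² + v² = -2ik` and `(uv)² = ξ² - k²`. The arguments `i(ξ-k)` and `-i(ξ+k)` leave the slit plane
exactly on the two cuts, which gives analyticity. On the real axis `u` and `v` are explicit real
multiples of `1 ± i`. For `Re ξ · Im ξ ≤ 0` we get `Im (uv)² ≤ 0`, so `uv` lies in the closed second
or fourth quadrant, and `Im (u² + v²) < 0` rules out the second. -/

open Complex

lemma Real.sqrt_div_two_mul_sqrt_div_two {a : ℝ} (ha : 0 ≤ a) (b : ℝ) :
    √(a / 2) * √(b / 2) = √(a * b) / 2 := by
  rw [← Real.sqrt_mul (by positivity), show a / 2 * (b / 2) = a * b / 2 ^ 2 by ring,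
    Real.sqrt_div' _ (by positivity), Real.sqrt_sq zero_le_two]

lemma re_cpow_one_half_nonneg (z : ℂ) : 0 ≤ (z ^ (1 / 2 : ℂ)).re := by
  rw [one_div, cpow_inv_two_re]
  exact Real.sqrt_nonneg _

lemma cpow_one_half_sq (z : ℂ) : (z ^ (1 / 2 : ℂ)) ^ 2 = z := by
  rw [one_div]
  exact cpow_ofNat_inv_pow z 2

lemma cpow_one_half_I_mul_ofReal_of_nonneg {a : ℝ} (ha : 0 ≤ a) :
    (I * a) ^ (1 / 2 : ℂ) = √(a / 2) * (1 + I) := by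
  rw [one_div, ← Complex.sqrt, Complex.sqrt_eq_real_add_ite]
  simp only [norm_mul, norm_I, norm_real, Real.norm_eq_abs, abs_of_nonneg ha, mul_re, mul_im,
    I_re, I_im, ofReal_re, ofReal_im]
  rw [if_pos (by linarith)]
  ring_nf

lemma cpow_one_half_I_mul_ofReal_of_nonpos {a : ℝ} (ha : a ≤ 0) :
    (I * a) ^ (1 / 2 : ℂ) = √(-a / 2) * (1 - I) := by
  rw [one_div, ← Complex.sqrt, Complex.sqrt_eq_real_add_ite]
  simp only [norm_mul, norm_I, norm_real, Real.norm_eq_abs, abs_of_nonpos ha, mul_re, mul_im,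
    I_re, I_im, ofReal_re, ofReal_im]
  rcases ha.lt_or_eq with ha | rfl
  · rw [if_neg (by linarith)]
    ring_nf
  · simp

lemma re_mul_nonneg_and_im_mul_nonpos_of_im_neg {u v : ℂ} (hu : 0 ≤ u.re) (hv : 0 ≤ v.re)
    (hu' : u.im < 0) (hsum : (u ^ 2 + v ^ 2).im < 0) (hprod : ((u * v) ^ 2).im ≤ 0) :
    0 ≤ (u * v).re ∧ (u * v).im ≤ 0 := by
  simp only [pow_two, add_im, mul_im, mul_re] at hsum hprod ⊢
  set p := u.re; set q := u.im; set r := v.re; set s := v.im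
  rcases le_or_gt s 0 with hs | hs
  · have hps : p * s ≤ 0 := mul_nonpos_of_nonneg_of_nonpos hu hs
    have hqr : q * r ≤ 0 := mul_nonpos_of_nonpos_of_nonneg hu'.le hv
    refine ⟨?_, by linarith⟩
    by_contra! hre
    have him : 0 ≤ p * s + q * r := by nlinarith
    have hr0 : r = 0 := (mul_eq_zero.mp (by linarith : q * r = 0)).resolve_left hu'.ne
    have hs0 : s < 0 := by nlinarith
    have hp0 : p = 0 := (mul_eq_zero.mp (by linarith : p * s = 0)).resolve_right hs0.ne
    simp [hp0, hr0] at hsum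
  · have hre : 0 < p * r - q * s := by nlinarith [mul_nonneg hu hv]
    exact ⟨hre.le, nonpos_of_mul_nonpos_right (by linarith) hre⟩

theorem re_mul_nonneg_and_im_mul_nonpos {u v : ℂ} (hu : 0 ≤ u.re) (hv : 0 ≤ v.re)
    (hsum : (u ^ 2 + v ^ 2).im < 0) (hprod : ((u * v) ^ 2).im ≤ 0) :
    0 ≤ (u * v).re ∧ (u * v).im ≤ 0 := by
  rcases lt_or_ge u.im 0 with hu' | hu'
  · exact re_mul_nonneg_and_im_mul_nonpos_of_im_neg hu hv hu' hsum hprod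
  · have hv' : v.im < 0 := by
      by_contra! hv'
      simp only [pow_two, add_im, mul_im] at hsum
      nlinarith [mul_nonneg hu hu', mul_nonneg hv hv']
    rw [mul_comm] at hprod ⊢
    exact re_mul_nonneg_and_im_mul_nonpos_of_im_neg hv hu hv' (by rwa [add_comm]) hprod

lemma mem_slitPlane_of_notMem_branchCuts {k : ℝ} {ξ : ℂ} (hξ : ξ ∉ branchCuts k) :
    I * (ξ - k) ∈ slitPlane ∧ -I * (ξ + k) ∈ slitPlane := by
  simp only [branchCuts, mem_union, mem_ofPred_eq, not_or, not_and, not_le] at hξ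
  simp only [mem_slitPlane_iff, mul_re, mul_im, I_re, I_im, neg_re, neg_im, sub_re, sub_im,
    add_re, add_im, ofReal_re, ofReal_im]
  constructor
  · by_cases h : ξ.re = k
    · left; linarith [hξ.2 h]
    · right; intro h'; apply h; linarith
  · by_cases h : ξ.re = -k
    · left; linarith [hξ.1 h]
    · right; intro h'; apply h; linarith

theorem analyticOnNhd_alphaStar (k : ℝ) : AnalyticOnNhd ℂ (alphaStar k) (branchCuts k)ᶜ := by
  intro ξ hξ
  obtain ⟨h₁, h₂⟩ := mem_slitPlane_of_notMem_branchCuts hξ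
  exact ((analyticAt_const.mul (analyticAt_id.sub analyticAt_const)).cpow analyticAt_const h₁
    |>.mul <| (analyticAt_const.mul (analyticAt_id.add analyticAt_const)).cpow
      analyticAt_const h₂).neg

lemma alphaStar_ofReal (k ξ : ℝ) :
    alphaStar k ξ = -((I * ↑(ξ - k)) ^ (1 / 2 : ℂ) * (I * ↑(-(ξ + k))) ^ (1 / 2 : ℂ)) := by
  rw [alphaStar]
  push_cast
  ring_nf

theorem alphaStar_ofReal_of_abs_lt {k ξ : ℝ} (hξ : |ξ| < k) :
    alphaStar k ξ = I * √(k ^ 2 - ξ ^ 2) := by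
  obtain ⟨hl, hr⟩ := abs_lt.mp hξ
  have hsqrt : (√(-(ξ - k) / 2) : ℂ) * √(-(-(ξ + k)) / 2) = √(k ^ 2 - ξ ^ 2) / 2 := by
    rw [← ofReal_mul, Real.sqrt_div_two_mul_sqrt_div_two (by linarith),
      show -(ξ - k) * -(-(ξ + k)) = k ^ 2 - ξ ^ 2 by ring]
    norm_cast
  rw [alphaStar_ofReal, cpow_one_half_I_mul_ofReal_of_nonpos (by linarith),
    cpow_one_half_I_mul_ofReal_of_nonpos (by linarith)]
  linear_combination (-(1 - I) ^ 2) * hsqrt - (√(k ^ 2 - ξ ^ 2) / 2 : ℂ) * I_sq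

theorem alphaStar_ofReal_of_lt_abs {k ξ : ℝ} (hk : 0 < k) (hξ : k < |ξ|) :
    alphaStar k ξ = -(√(ξ ^ 2 - k ^ 2) : ℂ) := by
  rcases lt_abs.mp hξ with hξ | hξ
  · have hsqrt : (√((ξ - k) / 2) : ℂ) * √(-(-(ξ + k)) / 2) = √(ξ ^ 2 - k ^ 2) / 2 := by
      rw [← ofReal_mul, Real.sqrt_div_two_mul_sqrt_div_two (by linarith),
        show (ξ - k) * -(-(ξ + k)) = ξ ^ 2 - k ^ 2 by ring]
      norm_cast
    rw [alphaStar_ofReal, cpow_one_half_I_mul_ofReal_of_nonneg (by linarith),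
      cpow_one_half_I_mul_ofReal_of_nonpos (by linarith)]
    linear_combination (-(1 + I) * (1 - I)) * hsqrt + (√(ξ ^ 2 - k ^ 2) / 2 : ℂ) * I_sq
  · have hsqrt : (√(-(ξ - k) / 2) : ℂ) * √(-(ξ + k) / 2) = √(ξ ^ 2 - k ^ 2) / 2 := by
      rw [← ofReal_mul, Real.sqrt_div_two_mul_sqrt_div_two (by linarith),
        show -(ξ - k) * -(ξ + k) = ξ ^ 2 - k ^ 2 by ring]
      norm_cast
    rw [alphaStar_ofReal, cpow_one_half_I_mul_ofReal_of_nonpos (by linarith),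
      cpow_one_half_I_mul_ofReal_of_nonneg (by linarith)]
    linear_combination (-(1 - I) * (1 + I)) * hsqrt + (√(ξ ^ 2 - k ^ 2) / 2 : ℂ) * I_sq

theorem re_alphaStar_nonpos_and_im_nonneg {k : ℝ} (hk : 0 < k) {ξ : ℂ} (hξ : ξ.re * ξ.im ≤ 0) :
    (alphaStar k ξ).re ≤ 0 ∧ 0 ≤ (alphaStar k ξ).im := by
  set u := (I * (ξ - k)) ^ (1 / 2 : ℂ)
  set v := (-I * (ξ + k)) ^ (1 / 2 : ℂ)
  have hu : u ^ 2 = I * (ξ - k) := cpow_one_half_sq _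
  have hv : v ^ 2 = -I * (ξ + k) := cpow_one_half_sq _
  have hsum : u ^ 2 + v ^ 2 = -2 * k * I := by rw [hu, hv]; ring
  have hprod : (u * v) ^ 2 = ξ ^ 2 - k ^ 2 := by
    rw [mul_pow, hu, hv]
    linear_combination (k ^ 2 - ξ ^ 2) * I_sq
  have hsum_im : (u ^ 2 + v ^ 2).im < 0 := by simp [hsum, hk]
  have hprod_im : ((u * v) ^ 2).im ≤ 0 := by
    rw [hprod, sub_im, ← ofReal_pow, ofReal_im, sub_zero, pow_two, mul_im]
    linarith
  obtain ⟨hre, him⟩ := re_mul_nonneg_and_im_mul_nonpos (re_cpow_one_half_nonneg _)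
    (re_cpow_one_half_nonneg _) hsum_im hprod_im
  have hα : alphaStar k ξ = -(u * v) := rfl
  rw [hα, neg_re, neg_im]
  exact ⟨neg_nonpos.mpr hre, neg_nonneg.mpr him⟩

/-- Properties of `α_*`: (i) analytic off the branch cuts;
(ii) `α_*(ξ) = i√(k²-ξ²)` for real `|ξ| < k`; (iii) `α_*(ξ) = -√(ξ²-k²)` for real
`|ξ| > k`; (iv) for `ξ` in the closed second and fourth quadrants,
`Re α_*(ξ) ≤ 0` and `Im α_*(ξ) ≥ 0`. -/
theorem statement_11 (k : ℝ) (hk : 0 < k) :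
    AnalyticOnNhd ℂ (alphaStar k) (branchCuts k)ᶜ ∧
    (∀ ξ : ℝ, |ξ| < k →
      alphaStar k (ξ : ℂ) = Complex.I * Real.sqrt (k ^ 2 - ξ ^ 2)) ∧
    (∀ ξ : ℝ, k < |ξ| →
      alphaStar k (ξ : ℂ) = -(Real.sqrt (ξ ^ 2 - k ^ 2) : ℂ)) ∧
    (∀ ξ : ℂ, ξ.re * ξ.im ≤ 0 →
      (alphaStar k ξ).re ≤ 0 ∧ 0 ≤ (alphaStar k ξ).im) :=
  ⟨analyticOnNhd_alphaStar k, fun _ ↦ alphaStar_ofReal_of_abs_lt,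
    fun _ ↦ alphaStar_ofReal_of_lt_abs hk, fun _ ↦ re_alphaStar_nonpos_and_im_nonneg hk⟩

end
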